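/- arXiv:2206.03314 — 5 statements merged into one kernel-verified Lean document; each statement's English description precedes it below -/
import Mathlib

section
/- Let c : Fin n → Fin q be a level map with assignment matrix Z and cluster sizes n_j, let σ_b² ≥ 0 and σ_e² > 0 be reals, and set V = σ_b² • (Z * Zᵀ) + σ_e² • I_n. Then for every level j with n_j > 0 and every vector r : Fin n → ℝ, the j-th coordinate of the BLUP σ_b² • (Zᵀ *ᵥ (V⁻¹ *ᵥ r)) equals (n_j * σ_b² / (σ_e² + n_j * σ_b²)) * r̄_j, where r̄_j = (∑_{i : c i = j} r i) / n_j is the average of r over the observations in cluster j. -/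
/-!
Since `Zᵀ Z = diag(n_k)`, the matrix `Zᵀ` intertwines `V = σ_b² Z Zᵀ + σ_e² I` with the diagonal
matrix `diag(σ_e² + n_k σ_b²)`: `Zᵀ V = diag(σ_e² + n_k σ_b²) Zᵀ`. As `V` is positive definite, this
gives `Zᵀ V⁻¹ = diag(σ_e² + n_k σ_b²)⁻¹ Zᵀ`, and the `j`-th entry of `Zᵀ r` is the cluster sum of `r`.
-/

open Matrix Finset

section AssignmentMatrix

variable {ι κ R : Type*} [Fintype ι] [DecidableEq κ] [CommSemiring R]

variable (R) in
def assignmentMatrix (c : ι → κ) : Matrix ι κ R :=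
  of fun i k => if c i = k then 1 else 0

theorem transpose_assignmentMatrix_mul_self (c : ι → κ) :
    (assignmentMatrix R c)ᵀ * assignmentMatrix R c = diagonal fun k => (#{i | c i = k} : R) := by
  ext k l
  simp only [Matrix.mul_apply, transpose_apply, assignmentMatrix, of_apply, diagonal_apply]
  by_cases hkl : k = l
  · subst hkl
    simp +contextual [Finset.sum_boole]
  · simp +contextual [hkl, Ne.symm hkl]

theorem transpose_assignmentMatrix_mulVec (c : ι → κ) (r : ι → R) (k : κ) :
    ((assignmentMatrix R c)ᵀ *ᵥ r) k = ∑ i with c i = k, r i := by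
  simp [assignmentMatrix, mulVec, dotProduct, Finset.sum_filter]

end AssignmentMatrix

theorem posDef_smul_mul_transpose_add_smul_one {m n : Type*} [Fintype m] [DecidableEq m]
    [Fintype n] (Z : Matrix m n ℝ) {a b : ℝ} (ha : 0 ≤ a) (hb : 0 < b) :
    (a • (Z * Zᵀ) + b • 1).PosDef :=
  PosDef.posSemidef_add ((posSemidef_self_mul_conjTranspose Z).smul ha) (PosDef.one.smul hb)

section Intertwining

variable {m n : Type*} [Fintype m] [Fintype n] [DecidableEq m] [DecidableEq n]

theorem mul_nonsing_inv_eq_of_mul_eq_mul {R : Type*} [CommRing R] {A : Matrix m n R}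
    {V : Matrix n n R} {D E : Matrix m m R} (hV : IsUnit V.det) (hE : E * D = 1)
    (h : A * V = D * A) : A * V⁻¹ = E * A :=
  calc A * V⁻¹ = E * (D * A) * V⁻¹ := by rw [← Matrix.mul_assoc, hE, Matrix.one_mul]
    _ = E * A := by rw [← h, Matrix.mul_assoc, Matrix.mul_assoc, mul_nonsing_inv V hV, Matrix.mul_one]

theorem transpose_mul_smul_mul_transpose_add_smul_one {R : Type*} [CommRing R] {Z : Matrix m n R}
    {N : n → R} (hZ : Zᵀ * Z = diagonal N) (a b : R) :
    Zᵀ * (a • (Z * Zᵀ) + b • 1) = diagonal (fun k => b + N k * a) * Zᵀ := by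
  rw [Matrix.mul_add, Matrix.mul_smul, ← Matrix.mul_assoc, hZ, Matrix.mul_smul, Matrix.mul_one]
  ext k i
  simp only [Matrix.add_apply, Matrix.smul_apply, diagonal_mul, transpose_apply, smul_eq_mul]
  ring

theorem transpose_mul_inv_smul_mul_transpose_add_smul_one {Z : Matrix m n ℝ} {N : n → ℝ}
    (hZ : Zᵀ * Z = diagonal N) {a b : ℝ} (ha : 0 ≤ a) (hb : 0 < b) :
    Zᵀ * (a • (Z * Zᵀ) + b • 1)⁻¹ = diagonal (fun k => (b + N k * a)⁻¹) * Zᵀ := by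
  have hN (k : n) : 0 ≤ N k := by
    rw [← diagonal_apply_eq N k, ← hZ, Matrix.mul_apply]
    exact sum_nonneg fun i _ => mul_self_nonneg _
  have hd (k : n) : b + N k * a ≠ 0 := (add_pos_of_pos_of_nonneg hb (mul_nonneg (hN k) ha)).ne'
  have hV := (isUnit_iff_isUnit_det _).mp (posDef_smul_mul_transpose_add_smul_one Z ha hb).isUnit
  refine mul_nonsing_inv_eq_of_mul_eq_mul hV ?_ (transpose_mul_smul_mul_transpose_add_smul_one hZ a b)
  simp [diagonal_mul_diagonal, hd]

end Intertwining

/-- The BLUP of the random intercepts model reduces to a shrunken cluster mean: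
`b̂_j = n_j σ_b² / (σ_e² + n_j σ_b²) ⬝ r̄_j`. -/
theorem blup_eq_shrunken_cluster_mean {n q : ℕ} (c : Fin n → Fin q)
    (Z : Matrix (Fin n) (Fin q) ℝ)
    (hZ : ∀ i j, Z i j = if c i = j then 1 else 0)
    (σb2 σe2 : ℝ) (hσb : 0 ≤ σb2) (hσe : 0 < σe2)
    (V : Matrix (Fin n) (Fin n) ℝ)
    (hV : V = σb2 • (Z * Zᵀ) + σe2 • (1 : Matrix (Fin n) (Fin n) ℝ))
    (j : Fin q) (nj : ℕ) (hnj : nj = (Finset.univ.filter fun i => c i = j).card)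
    (hpos : 0 < nj) (r : Fin n → ℝ) :
    (σb2 • (Zᵀ *ᵥ (V⁻¹ *ᵥ r))) j =
      ((nj : ℝ) * σb2 / (σe2 + (nj : ℝ) * σb2)) *
        ((∑ i ∈ Finset.univ.filter fun i => c i = j, r i) / (nj : ℝ)) := by
  obtain rfl : Z = assignmentMatrix ℝ c := Matrix.ext hZ
  subst hV
  rw [Pi.smul_apply, mulVec_mulVec, transpose_mul_inv_smul_mul_transpose_add_smul_one
    (transpose_assignmentMatrix_mul_self c) hσb hσe, ← mulVec_mulVec, mulVec_diagonal,
    transpose_assignmentMatrix_mulVec, ← hnj, smul_eq_mul]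
  have hnj_ne : (nj : ℝ) ≠ 0 := Nat.cast_ne_zero.mpr hpos.ne'
  field_simp
end

section
/- Let V : ℝ → Matrix (Fin n) (Fin n) ℝ have derivative V' at θ₀ (HasDerivAt V V' θ₀), suppose V θ₀ is positive definite, and let r : Fin n → ℝ. Then the function θ ↦ (1/2) * (r ⬝ᵥ ((V θ)⁻¹ *ᵥ r)) + (1/2) * Real.log (V θ).det has derivative at θ₀ equal to -(1/2) * (r ⬝ᵥ (((V θ₀)⁻¹ * V' * (V θ₀)⁻¹) *ᵥ r)) + (1/2) * Matrix.trace ((V θ₀)⁻¹ * V'). -/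
open Matrix

attribute [local instance] Matrix.normedAddCommGroup Matrix.normedSpace

/-! The quadratic term is differentiated as a linear function of `V(θ)⁻¹`, whose derivative is
`-V⁻¹ V' V⁻¹` (the derivative of inversion in a normed algebra). For the log-determinant, write
`det V(θ) = det V(θ₀) · det (V(θ₀)⁻¹ V(θ))`: the second factor is a curve through the identity,
and in the Leibniz expansion of its determinant only the identity permutation contributes to
first order, which gives Jacobi's formula `(det V)' = det V · tr (V⁻¹ V')`. -/

section

variable {𝕜 : Type*} [NontriviallyNormedField 𝕜] {l m n : Type*} [Fintype n]
  {M : 𝕜 → Matrix m n 𝕜} {M' : Matrix m n 𝕜} {t : 𝕜}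

theorem hasDerivAt_matrix_iff :
    HasDerivAt M M' t ↔ ∀ i j, HasDerivAt (fun s => M s i j) (M' i j) t :=
  (hasDerivAt_pi (E' := fun _ : m => n → 𝕜)).trans (forall_congr' fun _ => hasDerivAt_pi)

theorem HasDerivAt.dotProduct_mulVec [Fintype m] (hM : HasDerivAt M M' t) (u : m → 𝕜)
    (v : n → 𝕜) : HasDerivAt (fun s => u ⬝ᵥ (M s *ᵥ v)) (u ⬝ᵥ (M' *ᵥ v)) t := by
  simp only [dotProduct, mulVec]
  exact HasDerivAt.fun_sum fun i _ => (HasDerivAt.fun_sum fun j _ =>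
    (hasDerivAt_matrix_iff.1 hM i j).mul_const (v j)).const_mul (u i)

theorem HasDerivAt.const_matrix_mul [Fintype m] (A : Matrix l m 𝕜) (hM : HasDerivAt M M' t) :
    HasDerivAt (fun s => A * M s) (A * M') t :=
  hasDerivAt_matrix_iff.2 fun i j => by
    simp only [mul_apply]
    exact HasDerivAt.fun_sum fun k _ => (hasDerivAt_matrix_iff.1 hM k j).const_mul (A i k)

end

section

variable {𝕜 : Type*} [NontriviallyNormedField 𝕜] {n : Type*} [Fintype n] [DecidableEq n]
  {M : 𝕜 → Matrix n n 𝕜} {M' : Matrix n n 𝕜} {t : 𝕜}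

theorem HasDerivAt.matrix_det_of_eq_one (hM : HasDerivAt M M' t) (h1 : M t = 1) :
    HasDerivAt (fun s => (M s).det) (trace M') t := by
  simp only [det_apply]
  refine (HasDerivAt.fun_sum fun σ _ => (HasDerivAt.fun_finsetProd fun i _ =>
    hasDerivAt_matrix_iff.1 hM (σ i) i).const_smul (Equiv.Perm.sign σ)).congr_deriv ?_
  rw [Finset.sum_eq_single 1]
  · simp [h1, trace, Finset.prod_eq_one, one_apply]
  · intro σ _ hσ
    refine smul_eq_zero_of_right _ (Finset.sum_eq_zero fun i _ => ?_)
    obtain ⟨k, hk, hki⟩ := Finset.exists_mem_ne (Equiv.Perm.two_le_card_support_of_ne_one hσ) i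
    rw [Finset.prod_eq_zero (Finset.mem_erase.2 ⟨hki, Finset.mem_univ k⟩)
      (by rw [h1]; exact one_apply_ne (Equiv.Perm.mem_support.1 hk)), zero_smul]
  · simp

theorem HasDerivAt.matrix_det (hM : HasDerivAt M M' t) (hA : IsUnit (M t)) :
    HasDerivAt (fun s => (M s).det) ((M t).det * trace ((M t)⁻¹ * M')) t := by
  have hdet := (isUnit_iff_isUnit_det _).1 hA
  have hfactor : (fun s => (M s).det) = fun s => (M t).det * ((M t)⁻¹ * M s).det :=
    funext fun s => by rw [← det_mul, mul_nonsing_inv_cancel_left _ _ hdet]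
  rw [hfactor]
  exact ((hM.const_matrix_mul _).matrix_det_of_eq_one (nonsing_inv_mul _ hdet)).const_mul _

theorem HasDerivAt.matrix_inv [CompleteSpace 𝕜] (hM : HasDerivAt M M' t) (hA : IsUnit (M t)) :
    HasDerivAt (fun s => (M s)⁻¹) (-((M t)⁻¹ * M' * (M t)⁻¹)) t := by
  -- `HasDerivAt` only sees the topology, so we may borrow the submultiplicative operator norm.
  let := Matrix.linftyOpNormedRing (n := n) (α := 𝕜)
  let := Matrix.linftyOpNormedAlgebra (n := n) (R := 𝕜) (α := 𝕜)
  have : HasSummableGeomSeries (Matrix n n 𝕜) :=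
    @instHasSummableGeomSeriesOfCompleteSpace _ _ (FiniteDimensional.complete 𝕜 _)
  obtain ⟨u, hu⟩ := hA
  have hinv := hasFDerivAt_ringInverse (𝕜 := 𝕜) u
  rw [hu] at hinv
  have hcomp := hinv.comp_hasDerivAt t hM
  simp only [Function.comp_def, ← nonsing_inv_eq_ringInverse, coe_units_inv, hu] at hcomp
  exact hcomp

end

theorem HasDerivAt.log_matrix_det {n : Type*} [Fintype n] [DecidableEq n] {M : ℝ → Matrix n n ℝ}
    {M' : Matrix n n ℝ} {t : ℝ} (hM : HasDerivAt M M' t) (hA : IsUnit (M t)) :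
    HasDerivAt (fun s => Real.log (M s).det) (trace ((M t)⁻¹ * M')) t := by
  have hdet : (M t).det ≠ 0 := ((isUnit_iff_isUnit_det _).1 hA).ne_zero
  simpa [hdet] using (hM.matrix_det hA).log hdet

/-- Gradient of the Gaussian negative log-likelihood with respect to a scalar
variance-component parameter:
`∂/∂θ (½ rᵀ V(θ)⁻¹ r + ½ log det V(θ)) = −½ rᵀ V⁻¹ V' V⁻¹ r + ½ tr(V⁻¹ V')`. -/
theorem hasDerivAt_nll {n : ℕ} (V : ℝ → Matrix (Fin n) (Fin n) ℝ)
    (V' : Matrix (Fin n) (Fin n) ℝ) (θ₀ : ℝ)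
    (hV : HasDerivAt V V' θ₀) (hpd : (V θ₀).PosDef) (r : Fin n → ℝ) :
    HasDerivAt
      (fun θ => (1 / 2) * (r ⬝ᵥ ((V θ)⁻¹ *ᵥ r)) + (1 / 2) * Real.log (V θ).det)
      (-(1 / 2) * (r ⬝ᵥ (((V θ₀)⁻¹ * V' * (V θ₀)⁻¹) *ᵥ r)) +
        (1 / 2) * Matrix.trace ((V θ₀)⁻¹ * V')) θ₀ := by
  have hquad := (hV.matrix_inv hpd.isUnit).dotProduct_mulVec r r
  have hlogdet := hV.log_matrix_det hpd.isUnit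
  refine ((hquad.const_mul (1 / 2)).add (hlogdet.const_mul (1 / 2))).congr_deriv ?_
  rw [neg_mulVec, dotProduct_neg]
  ring
end

section
/- Let K ≥ 1, m : Fin K → ℕ, and let M : (j : Fin K) → ℝ → Matrix (Fin (m j)) (Fin (m j)) ℝ be a family such that each M j has derivative M' j at θ₀ (HasDerivAt (M j) (M' j) θ₀) and each M j θ₀ is positive definite. Let r : (j : Fin K) → Fin (m j) → ℝ, let V θ = Matrix.blockDiagonal' (fun j => M j θ), and let R be the concatenated vector R ⟨j, i⟩ = r j i. Then the function θ ↦ (1/2) * (R ⬝ᵥ ((V θ)⁻¹ *ᵥ R)) + (1/2) * Real.log (V θ).det has derivative at θ₀ equal to ∑_{j : Fin K} (-(1/2) * (r j ⬝ᵥ (((M j θ₀)⁻¹ * M' j * (M j θ₀)⁻¹) *ᵥ r j)) + (1/2) * Matrix.trace ((M j θ₀)⁻¹ * M' j)). -/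
/-!
Over a block-diagonal covariance both terms of the negative log-likelihood split into per-block
terms: the inverse of a block-diagonal matrix is block-diagonal, so the quadratic form is a sum
over blocks, and its determinant is the product of the block determinants, so the log-determinant
is a sum as well. Each block is then differentiated separately: `d(V⁻¹) = -V⁻¹ dV V⁻¹`, and by
Jacobi's formula `d(log det V) = tr(V⁻¹ dV)`.
-/

open Matrix Filter Topology

attribute [local instance] Matrix.normedAddCommGroup Matrix.normedSpace

namespace Matrix

section BlockDiagonal

variable {o : Type*} [Fintype o] [DecidableEq o] {m : o → Type*} [∀ i, Fintype (m i)]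
  {R : Type*} [CommRing R]

theorem det_blockDiagonal' [∀ i, DecidableEq (m i)] (N : ∀ i, Matrix (m i) (m i) R) :
    (blockDiagonal' N).det = ∏ i, (N i).det := by
  let _ : LinearOrder o := LinearOrder.lift' (Fintype.equivFin o) (Fintype.equivFin o).injective
  have hbt : (blockDiagonal' N).BlockTriangular Sigma.fst := fun p q h =>
    blockDiagonal'_apply_ne N p.2 q.2 h.ne'
  rw [hbt.det_fintype]
  refine Finset.prod_congr rfl fun i _ => ?_
  rw [← det_submatrix_equiv_self (Equiv.sigmaSubtype i).symm]
  congr 1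
  ext k l
  simp [toSquareBlock_def, blockDiagonal'_apply_eq, Equiv.sigmaSubtype]

theorem inv_blockDiagonal' [∀ i, DecidableEq (m i)] (N : ∀ i, Matrix (m i) (m i) R)
    (h : ∀ i, IsUnit (N i).det) :
    (blockDiagonal' N)⁻¹ = blockDiagonal' fun i => (N i)⁻¹ := by
  refine inv_eq_right_inv ?_
  rw [← blockDiagonal'_mul, ← blockDiagonal'_one]
  exact congrArg blockDiagonal' (funext fun i => mul_nonsing_inv _ (h i))

theorem blockDiagonal'_mulVec (N : ∀ i, Matrix (m i) (m i) R) (v : ∀ i, m i → R) :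
    (blockDiagonal' N *ᵥ fun p => v p.1 p.2) = fun p => (N p.1 *ᵥ v p.1) p.2 := by
  ext ⟨i, k⟩
  simp only [mulVec, dotProduct, Fintype.sum_sigma]
  rw [Fintype.sum_eq_single i]
  · simp [blockDiagonal'_apply_eq]
  · intro j hj
    exact Finset.sum_eq_zero fun l _ => by
      rw [blockDiagonal'_apply_ne N k l (Ne.symm hj), zero_mul]

theorem dotProduct_blockDiagonal'_mulVec (N : ∀ i, Matrix (m i) (m i) R) (u v : ∀ i, m i → R) :
    (fun p => u p.1 p.2) ⬝ᵥ (blockDiagonal' N *ᵥ fun p => v p.1 p.2) =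
      ∑ i, u i ⬝ᵥ (N i *ᵥ v i) := by
  rw [blockDiagonal'_mulVec]
  exact Fintype.sum_sigma _

end BlockDiagonal

section Calculus

variable {𝕜 : Type*} [NontriviallyNormedField 𝕜] {n : Type*} [Fintype n]
  {M : 𝕜 → Matrix n n 𝕜} {M' : Matrix n n 𝕜} {x : 𝕜}

theorem hasDerivAt_dotProduct_mulVec (hM : HasDerivAt M M' x) (u v : n → 𝕜) :
    HasDerivAt (fun t => u ⬝ᵥ (M t *ᵥ v)) (u ⬝ᵥ (M' *ᵥ v)) x := by
  have hentry (i j : n) : HasDerivAt (fun t => M t i j) (M' i j) x :=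
    hasDerivAt_pi.mp (hasDerivAt_pi.mp hM i) j
  exact HasDerivAt.fun_sum fun i _ =>
    (HasDerivAt.fun_sum fun j _ => (hentry i j).mul_const (v j)).const_mul (u i)

variable [DecidableEq n]

def detRowContinuousMultilinear : ContinuousMultilinearMap 𝕜 (fun _ : n => n → 𝕜) 𝕜 :=
  { (detRowAlternating : (n → 𝕜) [⋀^n]→ₗ[𝕜] 𝕜).toMultilinearMap with
    cont := continuous_id.matrix_det }

theorem det_updateRow_eq_sum_mul_adjugate (A : Matrix n n 𝕜) (i : n) (b : n → 𝕜) :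
    (A.updateRow i b).det = ∑ k, b k * adjugate A k i := by
  rw [← cramer_transpose_apply, cramer_eq_adjugate_mulVec, ← adjugate_transpose]
  simp [mulVec, dotProduct, mul_comm]

theorem hasDerivAt_det (hM : HasDerivAt M M' x) :
    HasDerivAt (fun t => (M t).det) (trace (adjugate (M x) * M')) x := by
  have h := (detRowContinuousMultilinear.hasFDerivAt (M x)).comp_hasDerivAt x hM
  refine h.congr_deriv ((ContinuousMultilinearMap.linearDeriv_apply _ _ _).trans ?_)
  rw [trace_mul_comm]
  exact Finset.sum_congr rfl fun i _ => det_updateRow_eq_sum_mul_adjugate (M x) i (M' i)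

theorem hasDerivAt_inv (hM : HasDerivAt M M' x) (hx : (M x).det ≠ 0) :
    HasDerivAt (fun t => (M t)⁻¹) (-((M x)⁻¹ * M' * (M x)⁻¹)) x := by
  have hdet : ContinuousAt (fun t => (M t).det) x := (hasDerivAt_det hM).continuousAt
  have hinv : ContinuousAt (fun t => (M t)⁻¹) x := by
    refine (continuousAt_matrix_inv _ ?_).comp hM.continuousAt
    simpa only [Ring.inverse_eq_inv'] using continuousAt_inv₀ hx
  have hunit : ∀ᶠ t in 𝓝 x, IsUnit (M t) :=
    (hdet.eventually_ne hx).mono fun t ht => (isUnit_iff_isUnit_det _).mpr ht.isUnit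
  -- `(M t)⁻¹ - (M x)⁻¹ = (M t)⁻¹ * (M x - M t) * (M x)⁻¹` turns slopes of `M⁻¹` into slopes of `M`
  have hlim := (((hinv.tendsto.mono_left nhdsWithin_le_nhds).mul
    (hasDerivAt_iff_tendsto_slope.mp hM)).mul_const (M x)⁻¹).neg
  refine hasDerivAt_iff_tendsto_slope.mpr (hlim.congr' ?_)
  filter_upwards [nhdsWithin_le_nhds hunit] with t ht
  rw [slope_def_module, slope_def_module,
    inv_sub_inv (iff_of_true ht ((isUnit_iff_isUnit_det _).mpr hx.isUnit)), Matrix.mul_smul,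
    Matrix.smul_mul, ← smul_neg, ← Matrix.neg_mul, ← Matrix.mul_neg, neg_sub]

end Calculus

theorem hasDerivAt_log_det {n : Type*} [Fintype n] [DecidableEq n] {M : ℝ → Matrix n n ℝ}
    {M' : Matrix n n ℝ} {x : ℝ} (hM : HasDerivAt M M' x) (hx : (M x).det ≠ 0) :
    HasDerivAt (fun t => Real.log (M t).det) (trace ((M x)⁻¹ * M')) x :=
  ((hasDerivAt_det hM).log hx).congr_deriv <| by
    rw [inv_def, Ring.inverse_eq_inv', smul_mul, trace_smul, smul_eq_mul, div_eq_inv_mul]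

end Matrix

/-- Negative log-likelihood of `r` under `𝒩(0, V)`, up to the additive constant `(n/2) log 2π`. -/
noncomputable def gaussianNLL {n : Type*} [Fintype n] [DecidableEq n] (V : Matrix n n ℝ)
    (r : n → ℝ) : ℝ :=
  1 / 2 * (r ⬝ᵥ (V⁻¹ *ᵥ r)) + 1 / 2 * Real.log V.det

theorem gaussianNLL_blockDiagonal' {o : Type*} [Fintype o] [DecidableEq o] {m : o → Type*}
    [∀ i, Fintype (m i)] [∀ i, DecidableEq (m i)] (N : ∀ i, Matrix (m i) (m i) ℝ)
    (r : ∀ i, m i → ℝ) (hN : ∀ i, (N i).det ≠ 0) :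
    gaussianNLL (blockDiagonal' N) (fun p => r p.1 p.2) = ∑ i, gaussianNLL (N i) (r i) := by
  rw [gaussianNLL, det_blockDiagonal', inv_blockDiagonal' _ fun i => (hN i).isUnit,
    dotProduct_blockDiagonal'_mulVec, Real.log_prod fun i _ => hN i, Finset.mul_sum,
    Finset.mul_sum, ← Finset.sum_add_distrib]
  rfl

theorem hasDerivAt_gaussianNLL {n : Type*} [Fintype n] [DecidableEq n] {M : ℝ → Matrix n n ℝ}
    {M' : Matrix n n ℝ} {x : ℝ} (hM : HasDerivAt M M' x) (hx : (M x).det ≠ 0) (r : n → ℝ) :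
    HasDerivAt (fun t => gaussianNLL (M t) r)
      (-(1 / 2) * (r ⬝ᵥ (((M x)⁻¹ * M' * (M x)⁻¹) *ᵥ r)) + 1 / 2 * trace ((M x)⁻¹ * M')) x := by
  have hquad := hasDerivAt_dotProduct_mulVec (hasDerivAt_inv hM hx) r r
  rw [neg_mulVec, dotProduct_neg] at hquad
  exact ((hquad.const_mul _).add ((hasDerivAt_log_det hM hx).const_mul _)).congr_deriv (by ring)

theorem hasDerivAt_nll_blockDiagonal_general {K : ℕ} (m : Fin K → ℕ)
    (M : (j : Fin K) → ℝ → Matrix (Fin (m j)) (Fin (m j)) ℝ)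
    (M' : (j : Fin K) → Matrix (Fin (m j)) (Fin (m j)) ℝ) (θ₀ : ℝ)
    (hM : ∀ j, HasDerivAt (M j) (M' j) θ₀)
    (hpd : ∀ j, (M j θ₀).PosDef)
    (r : (j : Fin K) → Fin (m j) → ℝ)
    (R : ((j : Fin K) × Fin (m j)) → ℝ) (hR : ∀ p, R p = r p.1 p.2) :
    HasDerivAt
      (fun θ => (1 / 2) * (R ⬝ᵥ ((Matrix.blockDiagonal' fun j => M j θ)⁻¹ *ᵥ R)) +
        (1 / 2) * Real.log (Matrix.blockDiagonal' fun j => M j θ).det)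
      (∑ j : Fin K, (-(1 / 2) * (r j ⬝ᵥ (((M j θ₀)⁻¹ * M' j * (M j θ₀)⁻¹) *ᵥ r j)) +
        (1 / 2) * Matrix.trace ((M j θ₀)⁻¹ * M' j))) θ₀ := by
  obtain rfl : R = fun p => r p.1 p.2 := funext hR
  have hdet₀ (j : Fin K) : (M j θ₀).det ≠ 0 := (hpd j).det_pos.ne'
  have hdet : ∀ᶠ θ in 𝓝 θ₀, ∀ j, (M j θ).det ≠ 0 := eventually_all.mpr fun j =>
    (hasDerivAt_det (hM j)).continuousAt.eventually_ne (hdet₀ j)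
  refine (HasDerivAt.fun_sum fun j _ =>
    hasDerivAt_gaussianNLL (hM j) (hdet₀ j) (r j)).congr_of_eventuallyEq ?_
  filter_upwards [hdet] with θ hθ
  exact gaussianNLL_blockDiagonal' (fun j => M j θ) r hθ

/-- When the covariance matrix is block diagonal with positive definite blocks
`M j θ` aligned with a partition of the observations, the gradient of the
Gaussian NLL decomposes into a sum over blocks:
`∑_j (−½ r_jᵀ M_j⁻¹ M_j' M_j⁻¹ r_j + ½ tr(M_j⁻¹ M_j'))`. -/
theorem hasDerivAt_nll_blockDiagonal {K : ℕ} (hK : 1 ≤ K) (m : Fin K → ℕ)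
    (M : (j : Fin K) → ℝ → Matrix (Fin (m j)) (Fin (m j)) ℝ)
    (M' : (j : Fin K) → Matrix (Fin (m j)) (Fin (m j)) ℝ) (θ₀ : ℝ)
    (hM : ∀ j, HasDerivAt (M j) (M' j) θ₀)
    (hpd : ∀ j, (M j θ₀).PosDef)
    (r : (j : Fin K) → Fin (m j) → ℝ)
    (R : ((j : Fin K) × Fin (m j)) → ℝ) (hR : ∀ p, R p = r p.1 p.2) :
    HasDerivAt
      (fun θ => (1 / 2) * (R ⬝ᵥ ((Matrix.blockDiagonal' fun j => M j θ)⁻¹ *ᵥ R)) +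
        (1 / 2) * Real.log (Matrix.blockDiagonal' fun j => M j θ).det)
      (∑ j : Fin K, (-(1 / 2) * (r j ⬝ᵥ (((M j θ₀)⁻¹ * M' j * (M j θ₀)⁻¹) *ᵥ r j)) +
        (1 / 2) * Matrix.trace ((M j θ₀)⁻¹ * M' j))) θ₀ :=
  hasDerivAt_nll_blockDiagonal_general m M M' θ₀ hM hpd r R hR
end

section
/- Let L ≥ 1 and p > 0, let A : Fin L → Matrix (Fin n) (Fin n) ℝ be a family of real symmetric positive semidefinite matrices, and let C : Fin L → ℝ be such that for every l and every k with 1 ≤ k ≤ n, the k-th largest eigenvalue of A l is at most C l * (k : ℝ)^(-p). Then for every k with 1 ≤ k ≤ n, the k-th largest eigenvalue of the sum ∑_l A l is at most ((L : ℝ)^p * ∑_l C l) * (k : ℝ)^(-p). In particular a sum of L kernel matrices each with polynomial eigendecay of rate p has polynomial eigendecay of rate p. -/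
/-!
Weyl's inequality for `L` summands: a nonzero vector orthogonal to the first `i l` eigenvectors
of every `T l` and to the eigenvectors of `∑ l, T l` beyond index `j` exists once
`∑ l, i l ≤ j`, and its Rayleigh quotient is at least `λ_j (∑ l, T l)` and at most
`∑ l, λ_{i l} (T l)`. Taking `i l = ⌊(k - 1) / L⌋` for every `l` bounds `λ_k (∑ l, A l)` by
`∑ l, C l * ⌈k / L⌉ ^ (-p) ≤ L ^ p * (∑ l, C l) * k ^ (-p)`, where `C l ≥ λ_1 (A l) ≥ 0`
by positive semidefiniteness.
-/

open Matrix

/-- The `k`-th largest eigenvalue (counted with multiplicity) of a real square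
matrix, defined as the `(k-1)`-th entry of the multiset of roots of its
characteristic polynomial sorted in decreasing order (for a real symmetric
matrix these roots are exactly the eigenvalues). -/
noncomputable def kthLargestEigenvalue {n : ℕ} (A : Matrix (Fin n) (Fin n) ℝ)
    (k : ℕ) : ℝ :=
  (A.charpoly.roots.sort (· ≥ ·)).getD (k - 1) 0

open Finset Module
open scoped RealInnerProductSpace

theorem exists_ne_zero_forall_inner_eq_zero {E : Type*} [NormedAddCommGroup E]
    [InnerProductSpace ℝ E] [FiniteDimensional ℝ E] (s : Finset E) (hs : #s < finrank ℝ E) :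
    ∃ x : E, x ≠ 0 ∧ ∀ v ∈ s, ⟪v, x⟫ = 0 := by
  set K := Submodule.span ℝ (s : Set E)
  have hK : K ≠ ⊤ := by
    intro h
    have hKs : finrank ℝ K ≤ #s := finrank_span_finset_le_card s
    rw [h, finrank_top] at hKs
    omega
  obtain ⟨x, hx, hx0⟩ := Submodule.exists_mem_ne_zero_of_ne_bot
    (mt Submodule.orthogonal_eq_bot_iff.mp hK)
  exact ⟨x, hx0, fun v hv => (Submodule.mem_orthogonal K x).mp hx v (Submodule.subset_span hv)⟩

namespace LinearMap.IsSymmetric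

variable {E : Type*} [NormedAddCommGroup E] [InnerProductSpace ℝ E] [FiniteDimensional ℝ E]
  {T : E →ₗ[ℝ] E} (hT : T.IsSymmetric) {n : ℕ} (hn : finrank ℝ E = n)

theorem inner_apply_self_eq_sum (x : E) :
    ⟪x, T x⟫ = ∑ i, hT.eigenvalues hn i * ⟪hT.eigenvectorBasis hn i, x⟫ ^ 2 := by
  rw [← (hT.eigenvectorBasis hn).sum_inner_mul_inner x (T x)]
  refine sum_congr rfl fun i _ => ?_
  rw [← hT, apply_eigenvectorBasis, real_inner_smul_left, real_inner_comm x]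
  simp only [Real.ringHom_apply]
  ring

theorem inner_apply_self_le_eigenvalues_mul_norm_sq {x : E} {i : Fin n}
    (hx : ∀ j < i, ⟪hT.eigenvectorBasis hn j, x⟫ = 0) :
    ⟪x, T x⟫ ≤ hT.eigenvalues hn i * ‖x‖ ^ 2 := by
  rw [hT.inner_apply_self_eq_sum hn, ← (hT.eigenvectorBasis hn).sum_sq_inner_right x, mul_sum]
  refine sum_le_sum fun j _ => ?_
  rcases lt_or_ge j i with hji | hij
  · simp [hx j hji]
  · exact mul_le_mul_of_nonneg_right (hT.eigenvalues_antitone hn hij) (sq_nonneg _)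

theorem eigenvalues_mul_norm_sq_le_inner_apply_self {x : E} {i : Fin n}
    (hx : ∀ j, i < j → ⟪hT.eigenvectorBasis hn j, x⟫ = 0) :
    hT.eigenvalues hn i * ‖x‖ ^ 2 ≤ ⟪x, T x⟫ := by
  rw [hT.inner_apply_self_eq_sum hn, ← (hT.eigenvectorBasis hn).sum_sq_inner_right x, mul_sum]
  refine sum_le_sum fun j _ => ?_
  rcases lt_or_ge i j with hij | hji
  · simp [hx j hij]
  · exact mul_le_mul_of_nonneg_right (hT.eigenvalues_antitone hn hji) (sq_nonneg _)

end LinearMap.IsSymmetric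

namespace LinearMap

variable {E : Type*} [NormedAddCommGroup E] [InnerProductSpace ℝ E] [FiniteDimensional ℝ E]
  {n : ℕ} (hn : finrank ℝ E = n)

theorem eigenvalues_sum_le_sum_eigenvalues {ι : Type*} [Fintype ι] {T : ι → E →ₗ[ℝ] E}
    (hT : ∀ l, (T l).IsSymmetric) (i : ι → Fin n) (j : Fin n) (hij : ∑ l, (i l : ℕ) ≤ j) :
    (isSymmetric_sum univ fun l _ => hT l).eigenvalues hn j ≤
      ∑ l, (hT l).eigenvalues hn (i l) := by
  classical
  set hS := isSymmetric_sum univ fun l _ => hT l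
  set s : Finset E := (univ.biUnion fun l => (Iio (i l)).image ((hT l).eigenvectorBasis hn)) ∪
    (Ioi j).image (hS.eigenvectorBasis hn)
  have hs : #s < finrank ℝ E := by
    calc #s ≤ ∑ l, #(Iio (i l)) + #(Ioi j) :=
          (card_union_le _ _).trans (add_le_add (card_biUnion_le.trans
            (sum_le_sum fun l _ => card_image_le)) card_image_le)
      _ < finrank ℝ E := by simp only [Fin.card_Iio, Fin.card_Ioi]; omega
  obtain ⟨x, hx0, hx⟩ := exists_ne_zero_forall_inner_eq_zero s hs
  have hx_pos : 0 < ‖x‖ ^ 2 := by positivity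
  refine le_of_mul_le_mul_right ?_ hx_pos
  calc hS.eigenvalues hn j * ‖x‖ ^ 2 ≤ ⟪x, (∑ l, T l) x⟫ :=
        hS.eigenvalues_mul_norm_sq_le_inner_apply_self hn fun m hm =>
          hx _ (mem_union_right _ (mem_image_of_mem _ (mem_Ioi.mpr hm)))
    _ = ∑ l, ⟪x, T l x⟫ := by rw [sum_apply, inner_sum]
    _ ≤ ∑ l, (hT l).eigenvalues hn (i l) * ‖x‖ ^ 2 := sum_le_sum fun l _ =>
        (hT l).inner_apply_self_le_eigenvalues_mul_norm_sq hn fun m hm => hx _ (mem_union_left _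
          (mem_biUnion.mpr ⟨l, mem_univ l, mem_image_of_mem _ (mem_Iio.mpr hm)⟩))
    _ = (∑ l, (hT l).eigenvalues hn (i l)) * ‖x‖ ^ 2 := (sum_mul ..).symm

end LinearMap

namespace Matrix.IsHermitian

variable {n : ℕ} {A : Matrix (Fin n) (Fin n) ℝ}

theorem kthLargestEigenvalue_succ_eq (hA : A.IsHermitian) {k : ℕ} (hk : k < n) :
    kthLargestEigenvalue A (k + 1) =
      (isSymmetric_toEuclideanLin_iff.mpr hA).eigenvalues finrank_euclideanSpace_fin ⟨k, hk⟩ := by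
  have hsort := (isSymmetric_toEuclideanLin_iff.mpr hA).sort_roots_charpoly_eq_eigenvalues
    finrank_euclideanSpace_fin
  have hchar : (toEuclideanLin A).charpoly = A.charpoly := by
    rw [toEuclideanLin, toLpLin_eq_toLin, charpoly_toLin]
  rw [hchar] at hsort
  simp only [RCLike.re_to_real, Multiset.map_id'] at hsort
  rw [kthLargestEigenvalue, Nat.add_sub_cancel, hsort, List.getD_eq_getElem _ _ (by simpa),
    List.getElem_ofFn]

end Matrix.IsHermitian

theorem Matrix.PosSemidef.kthLargestEigenvalue_succ_nonneg {n : ℕ}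
    {A : Matrix (Fin n) (Fin n) ℝ} (hA : A.PosSemidef) {k : ℕ} (hk : k < n) :
    0 ≤ kthLargestEigenvalue A (k + 1) := by
  rw [hA.isHermitian.kthLargestEigenvalue_succ_eq hk]
  exact (isPositive_toEuclideanLin_iff.mpr hA).nonneg_eigenvalues _ _

theorem kthLargestEigenvalue_sum_le {n : ℕ} {ι : Type*} [Fintype ι]
    {A : ι → Matrix (Fin n) (Fin n) ℝ} (hA : ∀ l, (A l).IsHermitian) (i : ι → ℕ)
    (hi : ∀ l, i l < n) {k : ℕ} (hk : k < n) (hik : ∑ l, i l ≤ k) :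
    kthLargestEigenvalue (∑ l, A l) (k + 1) ≤ ∑ l, kthLargestEigenvalue (A l) (i l + 1) := by
  have hT l := isSymmetric_toEuclideanLin_iff.mpr (hA l)
  have hS : (∑ l, A l).IsHermitian := isSelfAdjoint_sum univ fun l _ => hA l
  rw [hS.kthLargestEigenvalue_succ_eq hk]
  simp only [fun l => (hA l).kthLargestEigenvalue_succ_eq (hi l)]
  convert LinearMap.eigenvalues_sum_le_sum_eigenvalues finrank_euclideanSpace_fin hT
    (fun l => ⟨i l, hi l⟩) ⟨k, hk⟩ hik using 2
  exact map_sum _ _ _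

theorem natCast_rpow_neg_le_mul_rpow_neg {L m k : ℕ} {p : ℝ} (hp : 0 ≤ p) (hk : 0 < k)
    (hkm : k ≤ L * m) : (m : ℝ) ^ (-p) ≤ (L : ℝ) ^ p * (k : ℝ) ^ (-p) := by
  have hL : (0 : ℝ) < L := by exact_mod_cast Nat.pos_of_ne_zero (by rintro rfl; omega)
  have hm : (0 : ℝ) < m := by exact_mod_cast Nat.pos_of_ne_zero (by rintro rfl; omega)
  calc (m : ℝ) ^ (-p) = (L : ℝ) ^ p * ((L : ℝ) * m) ^ (-p) := by
        rw [Real.mul_rpow hL.le hm.le, Real.rpow_neg hL.le, mul_inv_cancel_left₀ (by positivity)]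
    _ ≤ (L : ℝ) ^ p * (k : ℝ) ^ (-p) := by
        refine mul_le_mul_of_nonneg_left ?_ (by positivity)
        exact Real.rpow_le_rpow_of_nonpos (by exact_mod_cast hk) (by exact_mod_cast hkm)
          (neg_nonpos.mpr hp)

/-- A sum of `L` positive semidefinite kernel matrices, each with polynomial
eigendecay of rate `p` (constants `C l`), has polynomial eigendecay of rate `p`
with constant `L^p * ∑ C l`. -/
theorem polynomial_eigendecay_sum {n L : ℕ} (hL : 1 ≤ L) (p : ℝ) (hp : 0 < p)
    (A : Fin L → Matrix (Fin n) (Fin n) ℝ)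
    (hA : ∀ l, (A l).PosSemidef)
    (C : Fin L → ℝ)
    (hdecay : ∀ l, ∀ k : ℕ, 1 ≤ k → k ≤ n →
      kthLargestEigenvalue (A l) k ≤ C l * (k : ℝ) ^ (-p)) :
    ∀ k : ℕ, 1 ≤ k → k ≤ n →
      kthLargestEigenvalue (∑ l, A l) k ≤
        ((L : ℝ) ^ p * ∑ l, C l) * (k : ℝ) ^ (-p) := by
  intro k hk1 hkn
  obtain ⟨j, rfl⟩ : ∃ j, k = j + 1 := ⟨k - 1, by omega⟩
  set m := j / L
  have hmj : L * m ≤ j := Nat.mul_div_le j L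
  have hmn : m < n := (Nat.div_le_self j L).trans_lt hkn
  have hC : ∀ l, 0 ≤ C l := fun l => by
    simpa using ((hA l).kthLargestEigenvalue_succ_nonneg (by omega)).trans
      (hdecay l 1 le_rfl (by omega))
  calc kthLargestEigenvalue (∑ l, A l) (j + 1)
      ≤ ∑ l, kthLargestEigenvalue (A l) (m + 1) :=
        kthLargestEigenvalue_sum_le (fun l => (hA l).isHermitian) (fun _ => m)
          (fun _ => hmn) (by omega) (by simpa using hmj)
    _ ≤ ∑ l, C l * ((m + 1 : ℕ) : ℝ) ^ (-p) :=
        sum_le_sum fun l _ => hdecay l (m + 1) (Nat.le_add_left 1 m) hmn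
    _ ≤ ∑ l, C l * ((L : ℝ) ^ p * ((j + 1 : ℕ) : ℝ) ^ (-p)) := by
        gcongr with l
        · exact hC l
        · exact natCast_rpow_neg_le_mul_rpow_neg hp.le (by omega) (Nat.lt_mul_div_succ j hL)
    _ = ((L : ℝ) ^ p * ∑ l, C l) * ((j + 1 : ℕ) : ℝ) ^ (-p) := by
        rw [← sum_mul]
        ring
end

section
/- Let c : Fin n → Fin q be a level map with assignment matrix Z and cluster sizes n_j, with q ≤ n, and let a : ℝ. Then the characteristic polynomial of a • (Z * Zᵀ) equals X^(n - q) * ∏_{j : Fin q} (X - a * (n_j : ℝ)). In particular, the eigenvalues of σ_l² Z Zᵀ are σ_l² n_j for each level j (together with n − q additional zeros), so its spectrum lies in [0, σ_l² · max_j n_j] when σ_l² ≥ 0. -/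
/-! `Z Zᵀ` and `Zᵀ Z` have the same characteristic polynomial up to a factor `X ^ (n - q)`, and
`Zᵀ Z` is the diagonal matrix of cluster sizes, since two distinct columns of `Z` have disjoint
supports. -/

open Matrix Polynomial

theorem Matrix.transpose_mul_self_eq_diagonal_card {m k R : Type*} [Fintype m] [DecidableEq k]
    [NonAssocSemiring R] (c : m → k) (Z : Matrix m k R)
    (hZ : ∀ i j, Z i j = if c i = j then 1 else 0) :
    Zᵀ * Z = diagonal fun j => ((Finset.univ.filter fun i => c i = j).card : R) := by
  ext j l
  rcases eq_or_ne j l with rfl | hjl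
  · simp [mul_apply, hZ, ← ite_and, Finset.sum_boole]
  · refine (Finset.sum_eq_zero fun i _ => ?_).trans (diagonal_apply_ne _ hjl).symm
    simp only [transpose_apply, hZ, mul_ite, mul_one, mul_zero, ← ite_and]
    exact if_neg fun ⟨hl, hj⟩ => hjl (hj.symm.trans hl)

/-- The characteristic polynomial of `a • Z Zᵀ`, where `Z` is the assignment
matrix of a level map `c` with cluster sizes `n_j` and `q ≤ n`, equals
`X^(n-q) * ∏_j (X - a n_j)`; hence the eigenvalues of `σ_l² Z Zᵀ` are the
`σ_l² n_j` together with `n - q` zeros. -/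
theorem charpoly_smul_assignment_mul_transpose {n q : ℕ} (hqn : q ≤ n)
    (c : Fin n → Fin q) (Z : Matrix (Fin n) (Fin q) ℝ)
    (hZ : ∀ i j, Z i j = if c i = j then 1 else 0) (a : ℝ) :
    (a • (Z * Zᵀ)).charpoly =
      Polynomial.X ^ (n - q) *
        ∏ j : Fin q, (Polynomial.X -
          Polynomial.C (a * ((Finset.univ.filter fun i => c i = j).card : ℝ))) := by
  calc (a • (Z * Zᵀ)).charpoly = X ^ (n - q) * (Zᵀ * (a • Z)).charpoly := by
        rw [← smul_mul, charpoly_mul_comm_of_le _ _ (by simpa using hqn), Fintype.card_fin,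
          Fintype.card_fin]
    _ = _ := by
        rw [Matrix.mul_smul, transpose_mul_self_eq_diagonal_card c Z hZ, ← diagonal_smul,
          charpoly_diagonal]
        rfl
end
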